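/- arXiv:2403.04519 — 2 statements merged into one kernel-verified Lean document; each statement's English description precedes it below -/
import Mathlib

section
/- At the smaller positive root x₁ of h (when two distinct positive roots exist), the Jacobian determinant of the system at (x₁, qx₁) is negative, so (x₁, qx₁) is a saddle; at the larger root x₂ it is positive. -/
/-! The determinant `3 a x² + 2 b x + c` is `h(x) + x h'(x)`, the derivative of `x h(x)`, so at a root
`xᵢ` of `h` it equals `xᵢ h'(xᵢ)`. Since `h` is an upward parabola with roots `x₁ < x₂`,
`h'(x₁) = a (x₁ - x₂) < 0` and `h'(x₂) = a (x₂ - x₁) > 0`. -/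

section QuadraticRoots

variable {R : Type*} [CommRing R] [IsDomain R] {a b c x y : R}

theorem add_roots_of_quadratic_eq_zero (hx : a * x ^ 2 + b * x + c = 0)
    (hy : a * y ^ 2 + b * y + c = 0) (hxy : x ≠ y) : a * (x + y) + b = 0 := by
  have h : (x - y) * (a * (x + y) + b) = 0 := by linear_combination hx - hy
  exact (mul_eq_zero.mp h).resolve_left (sub_ne_zero.mpr hxy)

theorem three_mul_sq_add_two_mul_eq_of_roots (hx : a * x ^ 2 + b * x + c = 0)
    (hy : a * y ^ 2 + b * y + c = 0) (hxy : x ≠ y) :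
    3 * a * x ^ 2 + 2 * b * x + c = a * x * (x - y) := by
  linear_combination hx + x * add_roots_of_quadratic_eq_zero hx hy hxy

end QuadraticRoots

theorem stmt13_general (m q B e x₁ x₂ : ℝ) (hm : 0 < m) (hq : 0 < q)
    (hx₁ : 0 < x₁) (hlt : x₁ < x₂)
    (h₁ : m * (1 + q) * x₁ ^ 2 + (1 + q - B * m) * x₁ + (e - B) = 0)
    (h₂ : m * (1 + q) * x₂ ^ 2 + (1 + q - B * m) * x₂ + (e - B) = 0) :
    3 * m * (1 + q) * x₁ ^ 2 + 2 * (1 + q - B * m) * x₁ + (e - B) < 0 ∧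
    3 * m * (1 + q) * x₂ ^ 2 + 2 * (1 + q - B * m) * x₂ + (e - B) > 0 := by
  have ha : 0 < m * (1 + q) := by positivity
  have det₁ := three_mul_sq_add_two_mul_eq_of_roots h₁ h₂ hlt.ne
  have det₂ := three_mul_sq_add_two_mul_eq_of_roots h₂ h₁ hlt.ne'
  constructor
  · linarith [mul_neg_of_pos_of_neg (mul_pos ha hx₁) (sub_neg.mpr hlt)]
  · linarith [mul_pos (mul_pos ha (hx₁.trans hlt)) (sub_pos.mpr hlt)]

theorem stmt13 (m q B e x₁ x₂ : ℝ) (hm : 0 < m) (hq : 0 < q) (hB : 0 < B)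
    (heB : e > B) (hBm : B * m > q + 1)
    (he : e < B + (1 + q - B * m) ^ 2 / (4 * m * (1 + q)))
    (hx₁ : 0 < x₁) (hlt : x₁ < x₂)
    (h₁ : m * (1 + q) * x₁ ^ 2 + (1 + q - B * m) * x₁ + (e - B) = 0)
    (h₂ : m * (1 + q) * x₂ ^ 2 + (1 + q - B * m) * x₂ + (e - B) = 0) :
    3 * m * (1 + q) * x₁ ^ 2 + 2 * (1 + q - B * m) * x₁ + (e - B) < 0 ∧
    3 * m * (1 + q) * x₂ ^ 2 + 2 * (1 + q - B * m) * x₂ + (e - B) > 0 :=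
  stmt13_general m q B e x₁ x₂ hm hq hx₁ hlt h₁ h₂
end

section
/- For the system x' = x(1+mx)(B−x−y)−ex, y' = qx−y with Dulac function D(x,y) = 1/(xy), the divergence ∂(DP)/∂x + ∂(DQ)/∂y equals (−my² + (mB−1−2mx)y − q)/y², which is negative for all x > 0, y > 0 provided mB < 1 and q > 0, m > 0. -/
/-!
The Dulac function `1 / (x y)` cancels the factor `x` of `P`, so `D P = ((1 + m x)(B - x - y) - e) / y`
and `D Q = q / y - 1 / x`. Differentiating, the divergence is `(m (B - x - y) - (1 + m x)) / y - q / y²`.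
Over `y²` its numerator is `-m y² + (m B - 1) y - 2 m x y - q`, a sum of negative terms when `m B < 1`.
-/

lemma hasDerivAt_dulac_mul_P (m B e y : ℝ) {x : ℝ} (hx : x ≠ 0) :
    HasDerivAt (fun u => 1 / (u * y) * (u * (1 + m * u) * (B - u - y) - e * u))
      ((m * (B - x - y) - (1 + m * x)) / y) x := by
  have hreduced : HasDerivAt (fun u => ((1 + m * u) * (B - u - y) - e) / y)
      ((m * (B - x - y) + (1 + m * x) * (-1)) / y) x := by
    have hlin : HasDerivAt (fun u : ℝ => 1 + m * u) m x := by
      simpa using ((hasDerivAt_id x).const_mul m).const_add 1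
    have hdiff : HasDerivAt (fun u : ℝ => B - u - y) (-1) x :=
      ((hasDerivAt_id x).const_sub B).sub_const y
    exact ((hlin.mul hdiff).sub_const e).div_const y
  refine (hreduced.congr_of_eventuallyEq ?_).congr_deriv (by ring)
  filter_upwards [isOpen_ne.mem_nhds hx] with u hu
  have hfactor : u * (1 + m * u) * (B - u - y) - e * u = u * ((1 + m * u) * (B - u - y) - e) := by
    ring
  rw [hfactor, one_div, mul_inv, mul_comm u⁻¹, mul_assoc, inv_mul_cancel_left₀ hu, div_eq_inv_mul]

lemma hasDerivAt_dulac_mul_Q (q : ℝ) {x y : ℝ} (hx : x ≠ 0) (hy : y ≠ 0) :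
    HasDerivAt (fun v => 1 / (x * v) * (q * x - v)) (-q / y ^ 2) y := by
  have hreduced : HasDerivAt (fun v => q * v⁻¹ - 1 / x) (q * -(y ^ 2)⁻¹) y :=
    ((hasDerivAt_inv hy).const_mul q).sub_const (1 / x)
  refine (hreduced.congr_of_eventuallyEq ?_).congr_deriv (by ring)
  filter_upwards [isOpen_ne.mem_nhds hy] with v hv
  field_simp

lemma dulac_divergence_numerator_neg {m q B x y : ℝ} (hm : 0 < m) (hq : 0 < q) (hmB : m * B < 1)
    (hx : 0 < x) (hy : 0 < y) : -m * y ^ 2 + (m * B - 1 - 2 * m * x) * y - q < 0 := by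
  nlinarith [mul_pos hm (mul_pos hx hy), mul_pos hm (mul_pos hy hy)]

theorem stmt14_general (m q B e : ℝ) (hm : 0 < m) (hq : 0 < q)
    (hmB : m * B < 1) :
    let P : ℝ → ℝ → ℝ := fun x y => x * (1 + m * x) * (B - x - y) - e * x
    let Q : ℝ → ℝ → ℝ := fun x y => q * x - y
    let D : ℝ → ℝ → ℝ := fun x y => 1 / (x * y)
    ∀ x y : ℝ, 0 < x → 0 < y →
      deriv (fun u => D u y * P u y) x + deriv (fun v => D x v * Q x v) y =
        (-m * y ^ 2 + (m * B - 1 - 2 * m * x) * y - q) / y ^ 2 ∧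
      (-m * y ^ 2 + (m * B - 1 - 2 * m * x) * y - q) / y ^ 2 < 0 := by
  intro P Q D x y hx hy
  refine ⟨?_, div_neg_of_neg_of_pos (dulac_divergence_numerator_neg hm hq hmB hx hy) (by positivity)⟩
  rw [(hasDerivAt_dulac_mul_P m B e y hx.ne').deriv, (hasDerivAt_dulac_mul_Q q hx.ne' hy.ne').deriv]
  field_simp
  ring

theorem stmt14 (m q B e : ℝ) (hm : 0 < m) (hq : 0 < q) (hB : 0 < B)
    (hmB : m * B < 1) :
    let P : ℝ → ℝ → ℝ := fun x y => x * (1 + m * x) * (B - x - y) - e * x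
    let Q : ℝ → ℝ → ℝ := fun x y => q * x - y
    let D : ℝ → ℝ → ℝ := fun x y => 1 / (x * y)
    ∀ x y : ℝ, 0 < x → 0 < y →
      deriv (fun u => D u y * P u y) x + deriv (fun v => D x v * Q x v) y =
        (-m * y ^ 2 + (m * B - 1 - 2 * m * x) * y - q) / y ^ 2 ∧
      (-m * y ^ 2 + (m * B - 1 - 2 * m * x) * y - q) / y ^ 2 < 0 :=
  stmt14_general m q B e hm hq hmB
end
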